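/- arXiv:2011.09650 — 4 statements merged into one kernel-verified Lean document; each statement's English description precedes it below -/
import Mathlib

section
/- For k = π̄ = (π,π,π), min_{p∈T^3} w_2(π̄,p) = 69/8 and max_{p∈T^3} w_2(π̄,p) = 18. -/
open Real

/-- The dispersion function ε(k) = Σ_{i=1}^3 (1 - cos k_i), 2π-periodic on ℝ³. -/
noncomputable def eps (k : Fin 3 → ℝ) : ℝ := ∑ i, (1 - Real.cos (k i))

/-- w₂(k,p) = ε(k) + ε((k+p)/2) + ε(p). -/
noncomputable def w2 (k p : Fin 3 → ℝ) : ℝ :=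
  eps k + eps (fun i => (k i + p i) / 2) + eps p

noncomputable def pibar : Fin 3 → ℝ := fun _ => π

lemma cos_half_pi_add (t : ℝ) : Real.cos ((π + t) / 2) = - Real.sin (t / 2) := by
  have h : (π + t) / 2 = π / 2 + t / 2 := by ring
  rw [h, Real.cos_add, Real.cos_pi_div_two, Real.sin_pi_div_two]; ring

lemma cos_as_sin_half (t : ℝ) : Real.cos t = 1 - 2 * Real.sin (t / 2) ^ 2 := by
  have hsc := Real.sin_sq_add_cos_sq (t / 2)
  have h2 : Real.cos (2 * (t / 2)) = 2 * Real.cos (t / 2) ^ 2 - 1 := Real.cos_two_mul _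
  have hc : (2 : ℝ) * (t / 2) = t := by ring
  rw [hc] at h2
  linarith

lemma key (t : ℝ) : 7/8 ≤ 2 - Real.cos ((π + t)/2) - Real.cos t ∧
    2 - Real.cos ((π + t)/2) - Real.cos t ≤ 4 := by
  rw [cos_half_pi_add, cos_as_sin_half]
  have h1 := Real.neg_one_le_sin (t / 2)
  have h2 := Real.sin_le_one (t / 2)
  constructor <;> nlinarith [sq_nonneg (Real.sin (t/2) + 1/4)]

lemma w2_pibar_eq (p : Fin 3 → ℝ) :
    w2 pibar p = 6 + ∑ i, (2 - Real.cos ((π + p i) / 2) - Real.cos (p i)) := by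
  simp [w2, eps, pibar, Fin.sum_univ_three, Real.cos_pi]
  ring

/-- min_{p∈T³} w₂(π̄,p) = 69/8 and max_{p∈T³} w₂(π̄,p) = 18, where π̄ = (π,π,π). -/
theorem w2_pibar_min_max :
    IsLeast {x : ℝ | ∃ p : Fin 3 → ℝ, x = w2 pibar p} (69 / 8) ∧
    IsGreatest {x : ℝ | ∃ p : Fin 3 → ℝ, x = w2 pibar p} 18 := by
  have hs : Real.sin (Real.arcsin (1/4)) = 1/4 :=
    Real.sin_arcsin (by norm_num) (by norm_num)
  constructor
  · constructor
    · refine ⟨fun _ => -2 * Real.arcsin (1/4), ?_⟩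
      rw [w2_pibar_eq]
      have ht : ∀ i : Fin 3, (fun _ : Fin 3 => -2 * Real.arcsin (1/4)) i = -2 * Real.arcsin (1/4) := fun _ => rfl
      simp only [Fin.sum_univ_three]
      have hhalf : (-2 * Real.arcsin (1/4)) / 2 = -(Real.arcsin (1/4)) := by ring
      have h1 : Real.cos ((π + -2 * Real.arcsin (1/4)) / 2) = (1/4 : ℝ) := by
        rw [cos_half_pi_add, hhalf, Real.sin_neg, hs]; norm_num
      have h2 : Real.cos (-2 * Real.arcsin (1/4)) = 7/8 := by
        rw [cos_as_sin_half, hhalf, Real.sin_neg, hs]; norm_num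
      rw [h1, h2]; norm_num
    · rintro x ⟨p, rfl⟩
      rw [w2_pibar_eq, Fin.sum_univ_three]
      have h0 := (key (p 0)).1
      have h1 := (key (p 1)).1
      have h2 := (key (p 2)).1
      linarith
  · constructor
    · refine ⟨pibar, ?_⟩
      rw [w2_pibar_eq, Fin.sum_univ_three]
      have h : ∀ i : Fin 3, pibar i = π := fun _ => rfl
      simp only [pibar]
      have h1 : Real.cos ((π + π) / 2) = -1 := by
        have : (π + π) / 2 = π := by ring
        rw [this, Real.cos_pi]
      rw [h1, Real.cos_pi]; norm_num
    · rintro x ⟨p, rfl⟩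
      rw [w2_pibar_eq, Fin.sum_univ_three]
      have h0 := (key (p 0)).2
      have h1 := (key (p 1)).2
      have h2 := (key (p 2)).2
      linarith
end

section
/- The integral I(0,0) = ∫_{T^3} dt / w_2(0,t) is finite, i.e., the function t ↦ 1/w_2(0,t) is integrable on T^3 even though w_2(0,t) vanishes at t = 0. -/
open Real MeasureTheory

/-- The cube (-π,π]³ (the torus T³). -/
noncomputable def cube3 : Set (Fin 3 → ℝ) := Set.univ.pi fun _ => Set.Ioc (-π) π

/-- |x|^(-2/3) is integrable on (-π, π]. -/
lemma integrableOn_abs_rpow_neg23 :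
    IntegrableOn (fun x : ℝ => |x| ^ (-(2/3) : ℝ)) (Set.Ioc (-π) π) volume := by
  have hpos : IntegrableOn (fun x : ℝ => |x| ^ (-(2/3) : ℝ)) (Set.Ioc 0 π) volume := by
    have h1 : IntegrableOn (fun x : ℝ => x ^ (-(2/3) : ℝ)) (Set.Ioc 0 π) volume := by
      have h := intervalIntegral.intervalIntegrable_rpow' (a := 0) (b := π)
        (r := (-(2/3) : ℝ)) (by norm_num)
      rwa [intervalIntegrable_iff_integrableOn_Ioc_of_le pi_pos.le] at h
    exact h1.congr_fun (fun x hx => by rw [abs_of_pos hx.1]) measurableSet_Ioc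
  have hneg : IntegrableOn (fun x : ℝ => |x| ^ (-(2/3) : ℝ)) (Set.Ioc (-π) 0) volume := by
    rw [← (Measure.measurePreserving_neg (volume : Measure ℝ)).integrableOn_comp_preimage
        (Homeomorph.neg ℝ).measurableEmbedding]
    simp only [Function.comp_def, abs_neg, Set.neg_preimage, Set.neg_Ioc, neg_neg, neg_zero]
    rw [integrableOn_Ico_iff_integrableOn_Ioo]
    exact hpos.mono_set Set.Ioo_subset_Ioc_self
  have := hneg.union hpos
  rwa [Set.Ioc_union_Ioc_eq_Ioc (by linarith [pi_pos]) pi_pos.le] at this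

/-- Jordan-type bound: eps t ≥ (2/π²) Σ tᵢ² on the cube. -/
lemma eps_lower (t : Fin 3 → ℝ) (ht : ∀ i, |t i| ≤ π) :
    (2 / π ^ 2) * ∑ i, (t i) ^ 2 ≤ eps t := by
  rw [eps, Finset.mul_sum]
  refine Finset.sum_le_sum fun i _ => ?_
  have := Real.cos_le_one_sub_mul_cos_sq (ht i)
  linarith

/-- The integral I(0,0) = ∫_{T³} dt / w₂(0,t) is finite: t ↦ 1/w₂(0,t) is integrable
on T³ even though w₂(0,t) vanishes at t = 0. -/
theorem integrable_inv_w2_zero :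
    IntegrableOn (fun t : Fin 3 → ℝ => (w2 0 t)⁻¹) cube3 volume := by
  set g : ℝ → ℝ := (Set.Ioc (-π) π).indicator (fun x => |x| ^ (-(2/3) : ℝ)) with hg_def
  have hg : Integrable g volume :=
    (integrable_indicator_iff measurableSet_Ioc).2 integrableOn_abs_rpow_neg23
  have hG : Integrable (fun t : Fin 3 → ℝ => (π ^ 2 / 6) * ∏ i, g (t i)) volume :=
    (Integrable.fintype_prod (f := fun _ : Fin 3 => g) fun _ => hg).const_mul _
  refine Integrable.mono' hG.integrableOn ?_ ?_
  · refine Measurable.aestronglyMeasurable ?_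
    have hcont : Continuous fun t : Fin 3 → ℝ => w2 0 t := by
      unfold w2 eps
      fun_prop
    exact hcont.measurable.inv
  · have hae : ∀ᵐ t : Fin 3 → ℝ ∂(volume.restrict cube3),
        t ∈ cube3 ∧ ∀ i, t i ≠ 0 := by
      refine Filter.Eventually.and (ae_restrict_mem ?_) (ae_restrict_of_ae ?_)
      · exact MeasurableSet.univ_pi fun _ => measurableSet_Ioc
      · exact ae_all_iff.2 fun i => by
          have hv : (volume : Measure (Fin 3 → ℝ)) = Measure.pi fun _ => volume := rfl
          rw [hv]
          exact Measure.ae_eval_ne _ i 0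
    filter_upwards [hae] with t ht
    obtain ⟨htc, htne⟩ := ht
    have habs : ∀ i, |t i| ≤ π := fun i => by
      have := htc i (Set.mem_univ i)
      rw [abs_le]; exact ⟨(this.1).le, this.2⟩
    -- the product P = ∏ |tᵢ|^(2/3)
    set P : ℝ := ∏ i, |t i| ^ ((2/3) : ℝ) with hP_def
    have hP_pos : 0 < P := by
      refine Finset.prod_pos fun i _ => ?_
      exact Real.rpow_pos_of_pos (abs_pos.2 (htne i)) _
    -- AM-GM: 3 * P ≤ Σ tᵢ²
    have hamgm : 3 * P ≤ ∑ i, (t i) ^ 2 := by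
      have h3 : ∀ x : ℝ, |x| ^ ((2/3) : ℝ) = (x ^ 2) ^ ((1/3 : ℝ)) := by
        intro x
        rw [← sq_abs x, ← Real.rpow_natCast |x| 2, ← Real.rpow_mul (abs_nonneg x)]
        norm_num
      have := Real.geom_mean_le_arith_mean3_weighted
        (w₁ := 1/3) (w₂ := 1/3) (w₃ := 1/3)
        (p₁ := (t 0) ^ 2) (p₂ := (t 1) ^ 2) (p₃ := (t 2) ^ 2)
        (by norm_num) (by norm_num) (by norm_num)
        (sq_nonneg _) (sq_nonneg _) (sq_nonneg _) (by norm_num)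
      rw [hP_def, Fin.prod_univ_three, Fin.sum_univ_three, h3, h3, h3]
      nlinarith [this]
    -- lower bound on w2
    have hw2 : (6 / π ^ 2) * P ≤ w2 0 t := by
      have h1 : (2 / π ^ 2) * ∑ i, (t i) ^ 2 ≤ eps t := eps_lower t habs
      have h2 : 0 ≤ eps 0 + eps (fun i => (0 + t i) / 2) := by
        have he : ∀ u : Fin 3 → ℝ, 0 ≤ eps u := fun u =>
          Finset.sum_nonneg fun i _ => by linarith [Real.cos_le_one (u i)]
        have := he 0; have := he (fun i => (0 + t i) / 2); linarith
      have hpi2 : (0:ℝ) < π ^ 2 := by positivity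
      have : (2 / π ^ 2) * (3 * P) ≤ (2 / π ^ 2) * ∑ i, (t i) ^ 2 :=
        mul_le_mul_of_nonneg_left hamgm (by positivity)
      have heq : (2 / π ^ 2) * (3 * P) = 6 / π ^ 2 * P := by ring
      unfold w2
      simp only [Pi.zero_apply] at *
      linarith
    have hw2_pos : 0 < w2 0 t := lt_of_lt_of_le (by positivity) hw2
    -- conclude
    have hinv : (w2 0 t)⁻¹ ≤ (π ^ 2 / 6) * P⁻¹ := by
      calc (w2 0 t)⁻¹ ≤ ((6 / π ^ 2) * P)⁻¹ :=
            inv_anti₀ (by positivity) hw2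
        _ = (π ^ 2 / 6) * P⁻¹ := by rw [mul_inv, inv_div]
    have hProd : ∏ i, g (t i) = P⁻¹ := by
      rw [hP_def, ← Finset.prod_inv_distrib]
      refine Finset.prod_congr rfl fun i _ => ?_
      rw [hg_def, Set.indicator_of_mem (htc i (Set.mem_univ i)),
        ← Real.rpow_neg (abs_nonneg _)]
    rw [Real.norm_eq_abs, abs_of_pos (inv_pos.2 hw2_pos), hProd]
    exact hinv
end

section
/- Let H = H₁ ⊕ H₂ be a direct sum of Hilbert spaces, A₁ : H₁ → H₁ and A₂ : H₂ → H₂ bounded self-adjoint, B : H₂ → H₁ bounded, z ∈ ℝ, and suppose A₁ − z and A₂ − z are positive and boundedly invertible. Then for f = (f₁, f₂), the quadratic form ⟨(A − z)f, f⟩ < 0 (where A is the block operator with diagonal A₁, A₂ and off-diagonal μB, μB*) if and only if ⟨(μM(z) − I)g, g⟩ > 0 where g_i = (A_i − z)^{1/2} f_i and M(z) is the block operator with zero diagonal and off-diagonal entries −(A₁−z)^{−1/2} B (A₂−z)^{−1/2} and its adjoint. -/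
open scoped InnerProductSpace

/-- Birman–Schwinger reduction, first step. Let H = H₁ ⊕ H₂, A₁, A₂ bounded self-adjoint,
B : H₂ → H₁ bounded, z ∈ ℝ with A₁ − z and A₂ − z positive and boundedly invertible,
with positive self-adjoint square roots S₁, S₂ (with bounded inverses T₁, T₂).
Then for f = (f₁, f₂) the quadratic form ⟨(A − z)f, f⟩ of the block operator A
(diagonal A₁, A₂; off-diagonal μB, μB*) is negative iff ⟨(μM(z) − I)g, g⟩ > 0,
where gᵢ = (Aᵢ − z)^{1/2} fᵢ = Sᵢ fᵢ and M(z) has zero diagonal and off-diagonal entries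
−(A₁−z)^{−1/2} B (A₂−z)^{−1/2} = −T₁ ∘ B ∘ T₂ and its adjoint. -/
theorem birman_schwinger_first_step
    {H₁ H₂ : Type*} [NormedAddCommGroup H₁] [InnerProductSpace ℂ H₁] [CompleteSpace H₁]
    [NormedAddCommGroup H₂] [InnerProductSpace ℂ H₂] [CompleteSpace H₂]
    (A₁ : H₁ →L[ℂ] H₁) (A₂ : H₂ →L[ℂ] H₂) (B : H₂ →L[ℂ] H₁) (μ : ℝ) (z : ℝ)
    (hμ : 0 < μ) (hA₁ : IsSelfAdjoint A₁) (hA₂ : IsSelfAdjoint A₂)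
    (hA₁pos : ∀ x : H₁, 0 < (⟪A₁ x - (z : ℂ) • x, x⟫_ℂ).re ∨ x = 0)
    (hA₂pos : ∀ x : H₂, 0 < (⟪A₂ x - (z : ℂ) • x, x⟫_ℂ).re ∨ x = 0)
    (S₁ T₁ : H₁ →L[ℂ] H₁) (S₂ T₂ : H₂ →L[ℂ] H₂)
    (hS₁sa : IsSelfAdjoint S₁) (hS₂sa : IsSelfAdjoint S₂)
    (hS₁pos : ∀ x : H₁, 0 ≤ (⟪S₁ x, x⟫_ℂ).re)
    (hS₂pos : ∀ x : H₂, 0 ≤ (⟪S₂ x, x⟫_ℂ).re)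
    (hS₁sq : ∀ x : H₁, S₁ (S₁ x) = A₁ x - (z : ℂ) • x)
    (hS₂sq : ∀ x : H₂, S₂ (S₂ x) = A₂ x - (z : ℂ) • x)
    (hT₁l : T₁ ∘L S₁ = 1) (hT₁r : S₁ ∘L T₁ = 1)
    (hT₂l : T₂ ∘L S₂ = 1) (hT₂r : S₂ ∘L T₂ = 1)
    (f₁ : H₁) (f₂ : H₂) :
    -- ⟨(A − z)f, f⟩ < 0 for f = (f₁, f₂)
    ((⟪A₁ f₁ - (z : ℂ) • f₁, f₁⟫_ℂ).re + (⟪A₂ f₂ - (z : ℂ) • f₂, f₂⟫_ℂ).re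
        + 2 * μ * (⟪B f₂, f₁⟫_ℂ).re < 0)
      ↔
    -- ⟨(μM(z) − I)g, g⟩ > 0 for g = (S₁ f₁, S₂ f₂)
    (0 < 2 * μ * (⟪(-(T₁ ∘L B ∘L T₂)) (S₂ f₂), S₁ f₁⟫_ℂ).re
        - ‖S₁ f₁‖ ^ 2 - ‖S₂ f₂‖ ^ 2) := by
  have hT₁sa : ContinuousLinearMap.adjoint T₁ = T₁ := by
    have h1 : ContinuousLinearMap.adjoint T₁ ∘L S₁ = 1 := by
      calc ContinuousLinearMap.adjoint T₁ ∘L S₁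
          = ContinuousLinearMap.adjoint T₁ ∘L ContinuousLinearMap.adjoint S₁ := by
            rw [hS₁sa.adjoint_eq]
        _ = ContinuousLinearMap.adjoint (S₁ ∘L T₁) := (ContinuousLinearMap.adjoint_comp S₁ T₁).symm
        _ = 1 := by rw [hT₁r]; simp [ContinuousLinearMap.one_def, ContinuousLinearMap.adjoint_id]
    calc ContinuousLinearMap.adjoint T₁
        = (ContinuousLinearMap.adjoint T₁ ∘L S₁) ∘L T₁ := by
          rw [ContinuousLinearMap.comp_assoc, hT₁r]; rfl
      _ = T₁ := by rw [h1]; rfl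
  have e1 : (⟪A₁ f₁ - (z : ℂ) • f₁, f₁⟫_ℂ).re = ‖S₁ f₁‖ ^ 2 := by
    rw [← hS₁sq]
    have h := ContinuousLinearMap.adjoint_inner_left S₁ f₁ (S₁ f₁)
    rw [hS₁sa.adjoint_eq] at h
    rw [h]
    exact_mod_cast congrArg Complex.re (inner_self_eq_norm_sq_to_K _)
  have e2 : (⟪A₂ f₂ - (z : ℂ) • f₂, f₂⟫_ℂ).re = ‖S₂ f₂‖ ^ 2 := by
    rw [← hS₂sq]
    have h := ContinuousLinearMap.adjoint_inner_left S₂ f₂ (S₂ f₂)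
    rw [hS₂sa.adjoint_eq] at h
    rw [h]
    exact_mod_cast congrArg Complex.re (inner_self_eq_norm_sq_to_K _)
  have e3 : ⟪(-(T₁ ∘L B ∘L T₂)) (S₂ f₂), S₁ f₁⟫_ℂ = -⟪B f₂, f₁⟫_ℂ := by
    have hf₂ : T₂ (S₂ f₂) = f₂ := congrFun (congrArg DFunLike.coe hT₂l) f₂
    have hf₁ : T₁ (S₁ f₁) = f₁ := congrFun (congrArg DFunLike.coe hT₁l) f₁
    have h : ⟪T₁ (B f₂), S₁ f₁⟫_ℂ = ⟪B f₂, f₁⟫_ℂ := by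
      conv_lhs => rw [← hT₁sa]
      rw [ContinuousLinearMap.adjoint_inner_left, hf₁]
    simp only [ContinuousLinearMap.neg_apply, ContinuousLinearMap.comp_apply, hf₂,
      inner_neg_left, h]
  rw [e1, e2, e3]
  simp only [Complex.neg_re]
  constructor <;> intro h <;> nlinarith [sq_nonneg ‖S₁ f₁‖]
end

section
/- For a compact self-adjoint operator T on a Hilbert space and λ > 0, define n(λ, T) as the number of eigenvalues of T greater than λ (with multiplicity). Then the Weyl inequality holds: for compact self-adjoint A₁, A₂ and λ₁, λ₂ > 0, n(λ₁ + λ₂, A₁ + A₂) ≤ n(λ₁, A₁) + n(λ₂, A₂). -/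
open scoped InnerProductSpace

/-- n(λ, T) = sup{dim F : F ⊆ H a subspace with ⟨Tu, u⟩ > λ for all unit vectors u ∈ F}. -/
noncomputable def nEig {H : Type*} [NormedAddCommGroup H] [InnerProductSpace ℂ H]
    (lam : ℝ) (T : H →L[ℂ] H) : Cardinal :=
  ⨆ F : {F : Submodule ℂ H // ∀ u ∈ F, ‖u‖ = 1 → lam < (⟪T u, u⟫_ℂ).re},
    Module.rank ℂ F.1

/-!
If `⟪(A₁ + A₂) u, u⟫ > l₁ + l₂` on the unit sphere of `F`, then `A₁ + A₂` is bounded below on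
`F`, so compactness forces `F` to be finite dimensional. On `F` diagonalize the compressions of
`A₁` and `A₂`: the eigenvectors with eigenvalue `> lᵢ` span `Vᵢ`, on which the Rayleigh quotient
of `Aᵢ` exceeds `lᵢ`, while on `Vᵢᗮ ∩ F` it is at most `lᵢ`. Hence `V₁ᗮ ∩ V₂ᗮ ∩ F = 0`, i.e.
`V₁ + V₂ = F`, and `dim F ≤ dim V₁ + dim V₂ ≤ n(l₁, A₁) + n(l₂, A₂)`.
-/

open RCLike Module

theorem IsCompactOperator.finiteDimensional_of_mul_norm_le {𝕜 E F : Type*}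
    [NontriviallyNormedField 𝕜] [CompleteSpace 𝕜] [NormedAddCommGroup E] [NormedSpace 𝕜 E]
    [NormedAddCommGroup F] [NormedSpace 𝕜 F] {A : E →L[𝕜] F} (hA : IsCompactOperator A)
    {c : ℝ} (hc : 0 < c) {S : Submodule 𝕜 E} (hS : ∀ x ∈ S, c * ‖x‖ ≤ ‖A x‖) :
    FiniteDimensional 𝕜 S := by
  by_contra hinf
  -- Riesz: a bounded `1`-separated sequence in `S`; its image is `c`-separated yet precompact.
  obtain ⟨R, f, -, hfR, hf⟩ := exists_seq_norm_le_one_le_norm_sub hinf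
  have hK : IsCompact (closure (A '' Metric.closedBall 0 R)) :=
    hA.isCompact_closure_image_of_bounded Metric.isBounded_closedBall
  obtain ⟨_, -, φ, hφ, hlim⟩ := hK.tendsto_subseq (x := fun n => A (f n)) fun n =>
    subset_closure ⟨f n, by simpa using hfR n, rfl⟩
  obtain ⟨N, hN⟩ := Metric.cauchySeq_iff'.mp hlim.cauchySeq c hc
  have hsep : c ≤ ‖A (f (φ (N + 1))) - A (f (φ N))‖ := calc
    c ≤ c * ‖f (φ (N + 1)) - f (φ N)‖ :=
      le_mul_of_one_le_right hc.le (hf (hφ.injective.ne (by omega)))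
    _ ≤ ‖A ((f (φ (N + 1)) - f (φ N) : S) : E)‖ := hS _ (f (φ (N + 1)) - f (φ N)).2
    _ = _ := by simp
  exact hsep.not_gt (by simpa [dist_eq_norm] using hN (N + 1) (by omega))

section

variable {𝕜 E : Type*} [RCLike 𝕜] [NormedAddCommGroup E] [InnerProductSpace 𝕜 E]

theorem re_inner_map_smul_self (T : E →ₗ[𝕜] E) (c : 𝕜) (u : E) :
    re ⟪T (c • u), c • u⟫_𝕜 = ‖c‖ ^ 2 * re ⟪T u, u⟫_𝕜 := by
  rw [map_smul, inner_smul_left, inner_smul_right, ← mul_assoc, RCLike.conj_mul]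
  norm_cast
  rw [RCLike.re_ofReal_mul]

theorem forall_norm_eq_one_lt_re_inner_iff (T : E →ₗ[𝕜] E) (l : ℝ) (S : Submodule 𝕜 E) :
    (∀ u ∈ S, ‖u‖ = 1 → l < re ⟪T u, u⟫_𝕜) ↔ ∀ u ∈ S, u ≠ 0 → l * ‖u‖ ^ 2 < re ⟪T u, u⟫_𝕜 := by
  refine ⟨fun h u hu hu0 => ?_, fun h u hu hu1 => ?_⟩
  · have := h _ (S.smul_mem (‖u‖ : 𝕜)⁻¹ hu) (norm_smul_inv_norm hu0)
    rw [re_inner_map_smul_self, norm_inv, norm_ofReal, abs_norm, inv_pow, inv_mul_eq_div,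
      lt_div_iff₀ (by positivity)] at this
    linarith
  · simpa [hu1] using h u hu (norm_ne_zero_iff.mp (by simp [hu1]))

theorem IsCompactOperator.finiteDimensional_of_lt_re_inner {A : E →L[𝕜] E}
    (hA : IsCompactOperator A) {l : ℝ} (hl : 0 < l) {S : Submodule 𝕜 E}
    (hS : ∀ u ∈ S, u ≠ 0 → l * ‖u‖ ^ 2 < re ⟪A u, u⟫_𝕜) : FiniteDimensional 𝕜 S := by
  refine hA.finiteDimensional_of_mul_norm_le hl fun u hu => ?_
  rcases eq_or_ne u 0 with rfl | hu0
  · simp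
  have : l * ‖u‖ * ‖u‖ < ‖A u‖ * ‖u‖ := calc
    l * ‖u‖ * ‖u‖ = l * ‖u‖ ^ 2 := by ring
    _ < re ⟪A u, u⟫_𝕜 := hS u hu hu0
    _ ≤ ‖A u‖ * ‖u‖ := re_inner_le_norm _ _
  exact (lt_of_mul_lt_mul_right this (norm_nonneg u)).le

theorem OrthonormalBasis.re_inner_map_self_eq_sum {ι : Type*} [Fintype ι]
    (b : OrthonormalBasis ι 𝕜 E) {T : E →ₗ[𝕜] E} (hT : T.IsSymmetric) {μ : ι → ℝ}
    (hb : ∀ i, T (b i) = (μ i : 𝕜) • b i) (x : E) :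
    re ⟪T x, x⟫_𝕜 = ∑ i, μ i * ‖⟪b i, x⟫_𝕜‖ ^ 2 := by
  rw [← b.sum_inner_mul_inner, map_sum]
  refine Finset.sum_congr rfl fun i _ => ?_
  rw [hT, hb, inner_smul_right, ← inner_conj_symm x, mul_assoc, RCLike.conj_mul]
  norm_cast

theorem LinearMap.IsSymmetric.exists_lt_re_inner_and_re_inner_le_orthogonal
    [FiniteDimensional 𝕜 E] {T : E →ₗ[𝕜] E} (hT : T.IsSymmetric) (l : ℝ) :
    ∃ V : Submodule 𝕜 E, (∀ x ∈ V, x ≠ 0 → l * ‖x‖ ^ 2 < re ⟪T x, x⟫_𝕜) ∧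
      ∀ x ∈ Vᗮ, re ⟪T x, x⟫_𝕜 ≤ l * ‖x‖ ^ 2 := by
  set b := hT.eigenvectorBasis rfl
  set μ := hT.eigenvalues rfl
  have hray := b.re_inner_map_self_eq_sum hT (hT.apply_eigenvectorBasis rfl)
  have hnorm (x : E) : l * ‖x‖ ^ 2 = ∑ i, l * ‖⟪b i, x⟫_𝕜‖ ^ 2 := by
    rw [← Finset.mul_sum, b.sum_sq_norm_inner_right]
  refine ⟨Submodule.span 𝕜 (b '' {i | l < μ i}), fun x hx hx0 => ?_, fun x hx => ?_⟩
  · have hzero (i) (hi : μ i ≤ l) : ⟪b i, x⟫_𝕜 = 0 := by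
      refine (Submodule.span_le (p := LinearMap.ker (innerₛₗ 𝕜 (b i)))).mpr ?_ hx
      rintro _ ⟨j, hj, rfl⟩
      exact b.orthonormal.inner_eq_zero fun hij => (hij ▸ hi).not_gt hj
    obtain ⟨i, hi⟩ : ∃ i, ⟪b i, x⟫_𝕜 ≠ 0 := by
      by_contra! h
      exact hx0 (norm_eq_zero.mp (pow_eq_zero_iff two_ne_zero |>.mp (by
        simp [← b.sum_sq_norm_inner_right x, h])))
    rw [hray, hnorm]
    refine Finset.sum_lt_sum (fun j _ => ?_) ⟨i, Finset.mem_univ _, ?_⟩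
    · rcases le_or_gt (μ j) l with hj | hj
      · simp [hzero j hj]
      · exact mul_le_mul_of_nonneg_right hj.le (by positivity)
    · have hli : l < μ i := not_le.mp fun h => hi (hzero i h)
      exact mul_lt_mul_of_pos_right hli (by positivity)
  · have hzero (i) (hi : l < μ i) : ⟪b i, x⟫_𝕜 = 0 :=
      Submodule.inner_right_of_mem_orthogonal
        (Submodule.subset_span (Set.mem_image_of_mem b hi)) hx
    rw [hray, hnorm]
    refine Finset.sum_le_sum fun j _ => ?_
    rcases le_or_gt (μ j) l with hj | hj
    · exact mul_le_mul_of_nonneg_right hj (by positivity)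
    · simp [hzero j hj]

theorem LinearMap.IsSymmetric.exists_finrank_le_add_of_lt_re_inner_add [FiniteDimensional 𝕜 E]
    {T₁ T₂ : E →ₗ[𝕜] E} (h₁ : T₁.IsSymmetric) (h₂ : T₂.IsSymmetric) {l₁ l₂ : ℝ}
    (h : ∀ x : E, x ≠ 0 → (l₁ + l₂) * ‖x‖ ^ 2 < re ⟪(T₁ + T₂) x, x⟫_𝕜) :
    ∃ V₁ V₂ : Submodule 𝕜 E, (∀ x ∈ V₁, x ≠ 0 → l₁ * ‖x‖ ^ 2 < re ⟪T₁ x, x⟫_𝕜) ∧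
      (∀ x ∈ V₂, x ≠ 0 → l₂ * ‖x‖ ^ 2 < re ⟪T₂ x, x⟫_𝕜) ∧
      finrank 𝕜 E ≤ finrank 𝕜 V₁ + finrank 𝕜 V₂ := by
  obtain ⟨V₁, hV₁, hV₁perp⟩ := h₁.exists_lt_re_inner_and_re_inner_le_orthogonal l₁
  obtain ⟨V₂, hV₂, hV₂perp⟩ := h₂.exists_lt_re_inner_and_re_inner_le_orthogonal l₂
  have hsup : V₁ ⊔ V₂ = ⊤ := by
    rw [← Submodule.orthogonal_eq_bot_iff, ← Submodule.inf_orthogonal, eq_bot_iff]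
    rintro x ⟨hx₁, hx₂⟩
    by_contra hx0
    have := h x hx0
    rw [LinearMap.add_apply, inner_add_left, map_add] at this
    linarith [hV₁perp x hx₁, hV₂perp x hx₂]
  refine ⟨V₁, V₂, hV₁, hV₂, ?_⟩
  calc finrank 𝕜 E = finrank 𝕜 (V₁ ⊔ V₂ : Submodule 𝕜 E) := by rw [hsup, finrank_top]
    _ ≤ finrank 𝕜 V₁ + finrank 𝕜 V₂ := Submodule.finrank_add_le_finrank_add_finrank V₁ V₂

noncomputable def Submodule.compression (K : Submodule 𝕜 E) [K.HasOrthogonalProjection]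
    (A : E →ₗ[𝕜] E) : K →ₗ[𝕜] K :=
  K.orthogonalProjectionOnto.toLinearMap ∘ₗ A ∘ₗ K.subtype

@[simp]
theorem Submodule.inner_compression_apply (K : Submodule 𝕜 E) [K.HasOrthogonalProjection]
    (A : E →ₗ[𝕜] E) (x y : K) : ⟪K.compression A x, y⟫_𝕜 = ⟪A x, y⟫_𝕜 := by
  simp [Submodule.compression]

theorem LinearMap.IsSymmetric.compression {A : E →ₗ[𝕜] E} (hA : A.IsSymmetric)
    (K : Submodule 𝕜 E) [K.HasOrthogonalProjection] : (K.compression A).IsSymmetric := by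
  intro x y
  simpa [Submodule.compression] using hA x y

theorem LinearMap.IsSymmetric.exists_rank_le_add_of_lt_re_inner_add
    {A₁ A₂ : E →ₗ[𝕜] E} (h₁ : A₁.IsSymmetric) (h₂ : A₂.IsSymmetric) {l₁ l₂ : ℝ}
    (F : Submodule 𝕜 E) [FiniteDimensional 𝕜 F]
    (hF : ∀ u ∈ F, u ≠ 0 → (l₁ + l₂) * ‖u‖ ^ 2 < re ⟪(A₁ + A₂) u, u⟫_𝕜) :
    ∃ V₁ V₂ : Submodule 𝕜 E, (∀ u ∈ V₁, u ≠ 0 → l₁ * ‖u‖ ^ 2 < re ⟪A₁ u, u⟫_𝕜) ∧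
      (∀ u ∈ V₂, u ≠ 0 → l₂ * ‖u‖ ^ 2 < re ⟪A₂ u, u⟫_𝕜) ∧
      Module.rank 𝕜 F ≤ Module.rank 𝕜 V₁ + Module.rank 𝕜 V₂ := by
  obtain ⟨W₁, W₂, hW₁, hW₂, hle⟩ :=
    (h₁.compression F).exists_finrank_le_add_of_lt_re_inner_add (h₂.compression F)
      (l₁ := l₁) (l₂ := l₂) fun x hx0 => by
        rw [LinearMap.add_apply, inner_add_left, F.inner_compression_apply,
          F.inner_compression_apply, ← inner_add_left]
        exact hF x x.2 (by simpa using hx0)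
  have hmap {l : ℝ} {A : E →ₗ[𝕜] E} {W : Submodule 𝕜 F}
      (hW : ∀ x ∈ W, x ≠ 0 → l * ‖x‖ ^ 2 < re ⟪F.compression A x, x⟫_𝕜) :
      ∀ u ∈ W.map F.subtype, u ≠ 0 → l * ‖u‖ ^ 2 < re ⟪A u, u⟫_𝕜 := by
    rintro _ ⟨x, hx, rfl⟩ hx0
    rw [Submodule.subtype_apply, ← F.inner_compression_apply]
    exact hW x hx (by simpa using hx0)
  refine ⟨W₁.map F.subtype, W₂.map F.subtype, hmap hW₁, hmap hW₂, ?_⟩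
  have hrank (W : Submodule 𝕜 F) : Module.rank 𝕜 (W.map F.subtype) = finrank 𝕜 W := by
    rw [← (Submodule.equivMapOfInjective _ F.injective_subtype W).rank_eq, finrank_eq_rank]
  rw [hrank, hrank, ← finrank_eq_rank]
  exact_mod_cast hle

end

theorem le_nEig {H : Type*} [NormedAddCommGroup H] [InnerProductSpace ℂ H] {l : ℝ}
    {A : H →L[ℂ] H} {S : Submodule ℂ H} (hS : ∀ u ∈ S, ‖u‖ = 1 → l < (⟪A u, u⟫_ℂ).re) :
    Module.rank ℂ S ≤ nEig l A :=
  le_ciSup (f := fun F : {F : Submodule ℂ H // ∀ u ∈ F, ‖u‖ = 1 → l < (⟪A u, u⟫_ℂ).re} =>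
    Module.rank ℂ F.1) Cardinal.bddAbove_of_small ⟨S, hS⟩

/-- The Weyl inequality: for compact self-adjoint operators A₁, A₂ on a complex Hilbert
space and λ₁, λ₂ > 0, n(λ₁ + λ₂, A₁ + A₂) ≤ n(λ₁, A₁) + n(λ₂, A₂). -/
theorem weyl_inequality {H : Type*} [NormedAddCommGroup H] [InnerProductSpace ℂ H]
    [CompleteSpace H] (A₁ A₂ : H →L[ℂ] H)
    (hA₁c : IsCompactOperator A₁) (hA₂c : IsCompactOperator A₂)
    (hA₁ : IsSelfAdjoint A₁) (hA₂ : IsSelfAdjoint A₂)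
    (l₁ l₂ : ℝ) (hl₁ : 0 < l₁) (hl₂ : 0 < l₂) :
    nEig (l₁ + l₂) (A₁ + A₂) ≤ nEig l₁ A₁ + nEig l₂ A₂ := by
  refine ciSup_le' fun ⟨F, hF⟩ => ?_
  replace hF :=
    (forall_norm_eq_one_lt_re_inner_iff ((A₁ + A₂ : H →L[ℂ] H) : H →ₗ[ℂ] H) _ F).1 hF
  have : FiniteDimensional ℂ F :=
    (hA₁c.add hA₂c).finiteDimensional_of_lt_re_inner (add_pos hl₁ hl₂) hF
  obtain ⟨V₁, V₂, hV₁, hV₂, hle⟩ :=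
    hA₁.isSymmetric.exists_rank_le_add_of_lt_re_inner_add hA₂.isSymmetric F hF
  calc Module.rank ℂ F ≤ Module.rank ℂ V₁ + Module.rank ℂ V₂ := hle
    _ ≤ nEig l₁ A₁ + nEig l₂ A₂ := by
      gcongr
      · exact le_nEig ((forall_norm_eq_one_lt_re_inner_iff (A₁ : H →ₗ[ℂ] H) _ _).2 hV₁)
      · exact le_nEig ((forall_norm_eq_one_lt_re_inner_iff (A₂ : H →ₗ[ℂ] H) _ _).2 hV₂)
end
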